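/- arXiv:2311.01281 — 2 statements merged into one kernel-verified Lean document; each statement's English description precedes it below -/
import Mathlib

section
/- If two measurable functions f₁, f₂ : [0,1]² → ℝ are isomorphic, i.e., there exist measure-preserving invertible maps T, S of [0,1] (with Lebesgue measure) such that f₂(T x, S y) = f₁(x, y) for almost every (x, y), then the pushforward of the product Bernoulli measure (μ^∞ × μ^∞ on ([0,1]^ℕ)²) under the map (x, y) ↦ (f₁(xₙ, yₘ))ₙ,ₘ equals the pushforward under (x, y) ↦ (f₂(xₙ, yₘ))ₙ,ₘ; that is, isomorphic functions have equal matrix distributions. -/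
open MeasureTheory unitInterval
open scoped unitInterval

/-- `ν` is the infinite product of copies of `μ` on the sequence space. -/
def IsProductMeasure {α : Type*} [MeasurableSpace α] (μ : Measure α) (ν : Measure (ℕ → α)) : Prop :=
  ∀ (s : Finset ℕ) (A : ℕ → Set α), (∀ n, MeasurableSet (A n)) →
    ν {x | ∀ n ∈ s, x n ∈ A n} = ∏ n ∈ s, μ (A n)

/-! If `f₂ (T x) (S y) = f₁ x y` almost everywhere, then for a.e. pair of sequences `(x, y)` the
matrix of `f₁` at `(x, y)` equals the matrix of `f₂` at `(T ∘ x, S ∘ y)`, since there are only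
countably many entries. Applying `T` and `S` coordinatewise preserves the product measure, so the
two matrices have the same law. -/

open Measure

theorem IsProductMeasure.eq_infinitePi {α : Type*} [MeasurableSpace α] {μ : Measure α}
    [IsProbabilityMeasure μ] {ν : Measure (ℕ → α)} (h : IsProductMeasure μ ν) :
    ν = infinitePi fun _ => μ :=
  Measure.eq_infinitePi _ fun s t ht => by
    simpa [Set.pi] using h s t ht

theorem MeasureTheory.MeasurePreserving.map_comp_measurableEquiv {α β γ : Type*}
    [MeasurableSpace α] [MeasurableSpace β] [MeasurableSpace γ] {μ : Measure α} {ν : Measure β}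
    {e : α ≃ᵐ β} (he : MeasurePreserving e μ ν) (g : β → γ) :
    μ.map (g ∘ e) = ν.map g := by
  by_cases hg : AEMeasurable g ν
  · rw [← AEMeasurable.map_map_of_aemeasurable (he.map_eq ▸ hg) e.measurable.aemeasurable,
      he.map_eq]
  · rw [map_of_not_aemeasurable hg,
      map_of_not_aemeasurable (mt (he.aemeasurable_comp_iff e.measurableEmbedding).1 hg)]

theorem measurePreserving_infinitePi_pi {ι : Type*} {X Y : ι → Type*}
    [∀ i, MeasurableSpace (X i)] [∀ i, MeasurableSpace (Y i)]
    {μ : ∀ i, Measure (X i)} {ν : ∀ i, Measure (Y i)}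
    [∀ i, IsProbabilityMeasure (μ i)] [∀ i, IsProbabilityMeasure (ν i)]
    {f : ∀ i, X i → Y i} (hf : ∀ i, MeasurePreserving (f i) (μ i) (ν i)) :
    MeasurePreserving (fun x i => f i (x i)) (infinitePi μ) (infinitePi ν) :=
  ⟨measurable_pi_lambda _ fun i => (hf i).measurable.comp (measurable_pi_apply i), by
    simp only [infinitePi_map_pi μ fun i => (hf i).measurable, (hf _).map_eq]⟩

/-- The map `F_f` of the paper. -/
def sampleMatrix {α β γ : Type*} (f : α → β → γ) (p : (ℕ → α) × (ℕ → β)) (nm : ℕ × ℕ) : γ :=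
  f (p.1 nm.1) (p.2 nm.2)

theorem map_sampleMatrix_eq_of_ae_eq_comp {α β γ : Type*} [MeasurableSpace α] [MeasurableSpace β]
    [MeasurableSpace γ] {μ : Measure α} {ν : Measure β} [IsProbabilityMeasure μ]
    [IsProbabilityMeasure ν] {f₁ f₂ : α → β → γ} {T : α ≃ᵐ α} {S : β ≃ᵐ β}
    (hT : MeasurePreserving T μ μ) (hS : MeasurePreserving S ν ν)
    (hiso : ∀ᵐ p ∂(μ.prod ν), f₂ (T p.1) (S p.2) = f₁ p.1 p.2) :
    ((infinitePi fun _ : ℕ => μ).prod (infinitePi fun _ : ℕ => ν)).map (sampleMatrix f₁) =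
      ((infinitePi fun _ : ℕ => μ).prod (infinitePi fun _ : ℕ => ν)).map (sampleMatrix f₂) := by
  set ρ := (infinitePi fun _ : ℕ => μ).prod (infinitePi fun _ : ℕ => ν)
  set Φ := (MeasurableEquiv.piCongrRight fun _ : ℕ => T).prodCongr
    (MeasurableEquiv.piCongrRight fun _ : ℕ => S)
  have hΦ : MeasurePreserving Φ ρ ρ :=
    (measurePreserving_infinitePi_pi fun _ => hT).prod (measurePreserving_infinitePi_pi fun _ => hS)
  have hentry (nm : ℕ × ℕ) :
      ∀ᵐ p ∂ρ, f₂ (T (p.1 nm.1)) (S (p.2 nm.2)) = f₁ (p.1 nm.1) (p.2 nm.2) :=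
    ((measurePreserving_eval_infinitePi (fun _ => μ) nm.1).prod
      (measurePreserving_eval_infinitePi (fun _ => ν) nm.2)).quasiMeasurePreserving.ae
        (p := fun q => f₂ (T q.1) (S q.2) = f₁ q.1 q.2) hiso
  have hmatrix : sampleMatrix f₁ =ᵐ[ρ] sampleMatrix f₂ ∘ Φ := by
    filter_upwards [ae_all_iff.2 hentry] with p hp
    funext nm
    exact (hp nm).symm
  rw [map_congr hmatrix, hΦ.map_comp_measurableEquiv]

theorem stmt_0_general (f₁ f₂ : I → I → ℝ)
    (T S : I ≃ᵐ I)
    (hT : MeasurePreserving T volume volume) (hS : MeasurePreserving S volume volume)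
    (hiso : ∀ᵐ p : I × I ∂(volume.prod volume), f₂ (T p.1) (S p.2) = f₁ p.1 p.2)
    (νx νy : Measure (ℕ → I))
    (hνx : IsProductMeasure volume νx) (hνy : IsProductMeasure volume νy) :
    (νx.prod νy).map (fun p (nm : ℕ × ℕ) => f₁ (p.1 nm.1) (p.2 nm.2)) =
      (νx.prod νy).map (fun p (nm : ℕ × ℕ) => f₂ (p.1 nm.1) (p.2 nm.2)) := by
  rw [hνx.eq_infinitePi, hνy.eq_infinitePi]
  exact map_sampleMatrix_eq_of_ae_eq_comp hT hS hiso

/-- Isomorphic measurable functions of two variables have equal matrix distributions. -/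
theorem stmt_0 (f₁ f₂ : I → I → ℝ)
    (hf₁ : Measurable fun p : I × I => f₁ p.1 p.2)
    (hf₂ : Measurable fun p : I × I => f₂ p.1 p.2)
    (T S : I ≃ᵐ I)
    (hT : MeasurePreserving T volume volume) (hS : MeasurePreserving S volume volume)
    (hiso : ∀ᵐ p : I × I ∂(volume.prod volume), f₂ (T p.1) (S p.2) = f₁ p.1 p.2)
    (νx νy : Measure (ℕ → I))
    (hνx : IsProductMeasure volume νx) (hνy : IsProductMeasure volume νy) :
    (νx.prod νy).map (fun p (nm : ℕ × ℕ) => f₁ (p.1 nm.1) (p.2 nm.2)) =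
      (νx.prod νy).map (fun p (nm : ℕ × ℕ) => f₂ (p.1 nm.1) (p.2 nm.2)) :=
  stmt_0_general f₁ f₂ T S hT hS hiso νx νy hνx hνy
end

section
/- Let f(x, y) = x + y mod 1 on ℝ/ℤ × ℝ/ℤ with Haar measure. For μ^ℕ × μ^ℕ-almost every pair of sequences (xₙ), (yₘ) in ℝ/ℤ, the Cesàro averages (1/r) Σ_{k<r} y_k converge to 1/2 (when representatives in [0,1) are used), and hence the sequences (xₙ) and (yₘ) can be recovered from the array (xₙ + yₘ mod 1)ₙ,ₘ up to a common rotation; more precisely, the map F_f is injective on a set of full μ^ℕ × μ^ℕ-measure modulo the diagonal rotation action c ↦ ((xₙ + c), (yₘ − c)). -/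
open MeasureTheory Filter

/-- The representative in `[0,1)` of a point of `ℝ/ℤ`. -/
noncomputable def rep (y : UnitAddCircle) : ℝ := (AddCircle.equivIco 1 0 y : ℝ)

/-!
The first claim is the strong law of large numbers: under a product measure the coordinates are
pairwise independent and identically distributed, and `rep` has mean `∫₀¹ t dt = 1/2`. The second
is pure algebra: if `xₙ + yₘ = x'ₙ + y'ₘ` for all `n, m`, then `c := x'₀ - x₀` works (compare at
`m = 0`, resp. `n = 0`), so the full-measure set can be taken to be everything.
-/

open ProbabilityTheory

namespace IsProductMeasure

variable {α : Type*} [MeasurableSpace α] {μ : Measure α} {ν : Measure (ℕ → α)}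

lemma map_eval (hν : IsProductMeasure μ ν) (k : ℕ) : ν.map (fun x => x k) = μ := by
  ext A hA
  rw [Measure.map_apply (measurable_pi_apply k) hA]
  simpa [Set.preimage] using hν {k} (fun _ => A) (fun _ => hA)

lemma indepFun_eval (hν : IsProductMeasure μ ν) {i j : ℕ} (hij : i ≠ j) :
    (fun x : ℕ → α => x i) ⟂ᵢ[ν] (fun x => x j) := by
  rw [indepFun_iff_measure_inter_preimage_eq_mul]
  intro S T hS hT
  have hcyl : {x : ℕ → α | ∀ n ∈ ({i, j} : Finset ℕ), x n ∈ if n = i then S else T}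
      = (fun x => x i) ⁻¹' S ∩ (fun x => x j) ⁻¹' T := by
    ext x
    simp [hij.symm]
  have hprod : ∏ n ∈ ({i, j} : Finset ℕ), μ (if n = i then S else T) = μ S * μ T := by
    rw [Finset.prod_pair hij, if_pos rfl, if_neg hij.symm]
  rw [← hcyl, hν _ _ (fun n => by split_ifs <;> assumption), hprod,
    ← Measure.map_apply (measurable_pi_apply i) hS, ← Measure.map_apply (measurable_pi_apply j) hT,
    hν.map_eval, hν.map_eval]

lemma identDistrib_eval (hν : IsProductMeasure μ ν) (i j : ℕ) :
    IdentDistrib (fun x : ℕ → α => x i) (fun x => x j) ν ν :=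
  ⟨(measurable_pi_apply i).aemeasurable, (measurable_pi_apply j).aemeasurable,
    by rw [hν.map_eval, hν.map_eval]⟩

variable {E : Type*} [NormedAddCommGroup E] [NormedSpace ℝ E] [CompleteSpace E]
  [MeasurableSpace E] [BorelSpace E]

theorem ae_tendsto_average (hν : IsProductMeasure μ ν) {f : α → E} (hf : Integrable f μ) :
    ∀ᵐ x ∂ν, Tendsto (fun n : ℕ => (n : ℝ)⁻¹ • ∑ k ∈ Finset.range n, f (x k)) atTop
      (nhds (∫ a, f a ∂μ)) := by
  have hfν : ∀ k, AEStronglyMeasurable f (ν.map fun x => x k) := fun k => by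
    rw [hν.map_eval]; exact hf.aestronglyMeasurable
  have hint : Integrable (fun x : ℕ → α => f (x 0)) ν := by
    rw [← hν.map_eval 0] at hf
    exact (integrable_map_measure (hfν 0) (measurable_pi_apply 0).aemeasurable).mp hf
  have hmean : ∫ x, f (x 0) ∂ν = ∫ a, f a ∂μ := by
    rw [← integral_map (measurable_pi_apply 0).aemeasurable (hfν 0), hν.map_eval]
  have hindep : Pairwise fun i j => (fun x : ℕ → α => f (x i)) ⟂ᵢ[ν] fun x => f (x j) :=
    fun i j hij => (hν.indepFun_eval hij).comp₀ (measurable_pi_apply i).aemeasurable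
      (measurable_pi_apply j).aemeasurable (hfν i).aemeasurable (hfν j).aemeasurable
  have hident : ∀ i, IdentDistrib (fun x : ℕ → α => f (x i)) (fun x => f (x 0)) ν ν := fun i =>
    (hν.identDistrib_eval i 0).comp_of_aemeasurable (hfν i).aemeasurable
  simpa only [hmean] using strong_law_ae (fun k (x : ℕ → α) => f (x k)) hint hindep hident

end IsProductMeasure

lemma measurable_rep : Measurable rep :=
  measurable_subtype_coe.comp (AddCircle.measurableEquivIco (T := 1) 0).measurable

lemma rep_mem_Ico (y : UnitAddCircle) : rep y ∈ Set.Ico (0 : ℝ) 1 := by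
  simpa [rep] using (AddCircle.equivIco 1 0 y).2

lemma rep_coe {t : ℝ} (ht : t ∈ Set.Ico (0 : ℝ) 1) : rep t = t := by
  rw [rep, AddCircle.coe_equivIco_mk_apply, div_one, mul_one, Int.fract_eq_self.2 ht]

lemma integrable_rep : Integrable rep :=
  (integrable_const (1 : ℝ)).mono' measurable_rep.aestronglyMeasurable <| ae_of_all _ fun y => by
    rw [Real.norm_eq_abs, abs_of_nonneg (rep_mem_Ico y).1]
    exact (rep_mem_Ico y).2.le

lemma integral_rep : ∫ y, rep y = 1 / 2 := by
  rw [← UnitAddCircle.intervalIntegral_preimage 0 rep, zero_add]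
  have hrep : ∀ᵐ t, t ∈ Set.uIoc (0 : ℝ) 1 → rep t = t := by
    filter_upwards [Measure.ae_ne volume (1 : ℝ)] with t ht1 ht
    rw [Set.uIoc_of_le zero_le_one] at ht
    exact rep_coe ⟨ht.1.le, lt_of_le_of_ne ht.2 ht1⟩
  rw [intervalIntegral.integral_congr_ae hrep, integral_id]
  norm_num

lemma exists_shift_of_add_eq {ι κ G : Type*} [AddCommGroup G] (i₀ : ι) (j₀ : κ)
    {x x' : ι → G} {y y' : κ → G} (h : ∀ i j, x i + y j = x' i + y' j) :
    ∃ c, (∀ i, x' i = x i + c) ∧ ∀ j, y' j = y j - c := by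
  refine ⟨x' i₀ - x i₀, fun i => ?_, fun j => ?_⟩
  · grind [h i j₀, h i₀ j₀]
  · grind [h i₀ j]

theorem stmt_4_general (νx νy : Measure (ℕ → UnitAddCircle))
    (hνy : IsProductMeasure volume νy) :
    (∀ᵐ p : (ℕ → UnitAddCircle) × (ℕ → UnitAddCircle) ∂(νx.prod νy),
      Tendsto (fun r : ℕ => (r : ℝ)⁻¹ * ∑ k ∈ Finset.range r, rep (p.2 k)) atTop
        (nhds (1 / 2))) ∧
    ∃ A : Set ((ℕ → UnitAddCircle) × (ℕ → UnitAddCircle)),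
      (νx.prod νy) Aᶜ = 0 ∧
      ∀ p ∈ A, ∀ q ∈ A,
        (fun nm : ℕ × ℕ => p.1 nm.1 + p.2 nm.2) = (fun nm : ℕ × ℕ => q.1 nm.1 + q.2 nm.2) →
        ∃ c : UnitAddCircle, (∀ n, q.1 n = p.1 n + c) ∧ (∀ m, q.2 m = p.2 m - c) := by
  refine ⟨?_, Set.univ, by simp, fun p _ q _ hpq =>
    exists_shift_of_add_eq 0 0 fun n m => congrFun hpq (n, m)⟩
  have hlaw := hνy.ae_tendsto_average integrable_rep
  rw [integral_rep] at hlaw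
  simpa only [smul_eq_mul] using Measure.quasiMeasurePreserving_snd.ae hlaw

/-- For a.e. pair of sequences, the Cesàro averages of the representatives converge to `1/2`,
and the map `F_f`, `f(x,y) = x + y`, is injective on a full-measure set modulo the diagonal
rotation action. -/
theorem stmt_4 (νx νy : Measure (ℕ → UnitAddCircle))
    (hνx : IsProductMeasure volume νx) (hνy : IsProductMeasure volume νy) :
    (∀ᵐ p : (ℕ → UnitAddCircle) × (ℕ → UnitAddCircle) ∂(νx.prod νy),
      Tendsto (fun r : ℕ => (r : ℝ)⁻¹ * ∑ k ∈ Finset.range r, rep (p.2 k)) atTop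
        (nhds (1 / 2))) ∧
    ∃ A : Set ((ℕ → UnitAddCircle) × (ℕ → UnitAddCircle)),
      (νx.prod νy) Aᶜ = 0 ∧
      ∀ p ∈ A, ∀ q ∈ A,
        (fun nm : ℕ × ℕ => p.1 nm.1 + p.2 nm.2) = (fun nm : ℕ × ℕ => q.1 nm.1 + q.2 nm.2) →
        ∃ c : UnitAddCircle, (∀ n, q.1 n = p.1 n + c) ∧ (∀ m, q.2 m = p.2 m - c) :=
  stmt_4_general νx νy hνy
end
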